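/- For every integer k ≥ 1, let W_k ≤ (ℤ[√3]/(√3)^k)^× be the subgroup consisting of the classes modulo (√3)^k of the norms N(x), as x ranges over elements of ℤ[√3] whose class modulo (√3)^k is a unit. Then the quotient group (ℤ[√3]/(√3)^k)^× / W_k is cyclic of order 2·3^{⌊k/2⌋}, generated by the class of √3 − 1. -/

import Mathlib

/-!
Put `m = ⌈k/2⌉` and `f = ⌊k/2⌋`. Since `(√3)^k` is `3^f` or `3^f √3`, an element `x` of `ℤ[√3]`
lies in `(√3)^k` iff `3^m ∣ re x` and `3^f ∣ im x`. Hence `x` is a unit modulo `(√3)^k` iff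
`3 ∤ re x` (then `x · x̄ = N(x)` is an integer prime to 3), the integers embed as `ℤ/3^m`, and there
are `φ(3^m) · 3^f` units. A norm `a² - 3b²` of a unit is `≡ 1 mod 3`; conversely the units of
`ℤ/3^m` that are `≡ 1 mod 3` form a group of odd order `3^(m-1)`, so each is a square `a² = N(a)`.
Thus `W_k` is the image of that group, of index `2 · 3^f`.

Finally `(√3 - 1)^n` has real part `≡ (-1)^n mod 3`, and cubing an element with real part
`≡ 1 mod 3` multiplies its imaginary part by 3 times a unit mod 3. So the imaginary part of
`(√3 - 1)^(2 · 3^j) = (4 - 2√3)^(3^j)` has 3-adic valuation exactly `j`, which forces the order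
of `√3 - 1` modulo `W_k` to be `2 · 3^f`.
-/

/-- The quotient ring `ℤ[√3]/(√3)^k`. -/
abbrev Sqrt3Quot (k : ℕ) : Type :=
  Zsqrtd 3 ⧸ Ideal.span {(Zsqrtd.sqrtd : Zsqrtd 3) ^ k}

open Zsqrtd

namespace Zsqrtd

variable {d : ℤ}

theorem sqrtd_pow_two_mul (f : ℕ) : (sqrtd : ℤ√d) ^ (2 * f) = ((d ^ f : ℤ) : ℤ√d) := by
  rw [pow_mul, sq, dmuld]
  push_cast
  rfl

theorem intCast_mul_sqrtd_dvd_iff (c : ℤ) (x : ℤ√d) :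
    (c : ℤ√d) * sqrtd ∣ x ↔ c * d ∣ x.re ∧ c ∣ x.im := by
  constructor
  · rintro ⟨y, rfl⟩
    constructor <;> [use y.im; use y.re] <;>
      simp only [re_mul, im_mul, re_intCast, im_intCast, re_sqrtd, im_sqrtd] <;> ring
  · rintro ⟨⟨q, hq⟩, ⟨p, hp⟩⟩
    use ⟨p, q⟩
    ext <;> simp only [re_mul, im_mul, re_intCast, im_intCast, re_sqrtd, im_sqrtd, hq, hp] <;> ring

theorem sqrtd_pow_dvd_iff (k : ℕ) (x : ℤ√d) :
    sqrtd ^ k ∣ x ↔ d ^ ((k + 1) / 2) ∣ x.re ∧ d ^ (k / 2) ∣ x.im := by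
  obtain ⟨f, rfl | rfl⟩ := Nat.even_or_odd' k
  · rw [sqrtd_pow_two_mul, intCast_dvd, show (2 * f + 1) / 2 = f by omega,
      show 2 * f / 2 = f by omega]
  · rw [pow_succ, sqrtd_pow_two_mul, intCast_mul_sqrtd_dvd_iff, ← pow_succ,
      show (2 * f + 1 + 1) / 2 = f + 1 by omega, show (2 * f + 1) / 2 = f by omega]

def reModThree : ℤ√3 →+* ZMod 3 := Zsqrtd.lift ⟨0, rfl⟩

theorem reModThree_apply (x : ℤ√3) : reModThree x = x.re := by
  simp [reModThree]

theorem intCast_norm_eq_one {x : ℤ√3} (hx : ¬ 3 ∣ x.re) : (x.norm : ZMod 3) = 1 := by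
  have hre : (x.re : ZMod 3) ≠ 0 := by
    rwa [Ne, ZMod.intCast_zmod_eq_zero_iff_dvd]
  rw [norm_def]
  push_cast
  rw [show (3 : ZMod 3) = 0 from rfl, zero_mul, zero_mul, sub_zero, ← sq]
  exact ZMod.pow_card_sub_one_eq_one hre

-- `(a + b√3)³` has imaginary part `3b(a² + b²)`, and `1 + b²` is never `0` mod 3.
theorem exists_im_pow_three_eq {z : ℤ√3} (hz : (z.re : ZMod 3) = 1) :
    ∃ c : ℤ, (z ^ 3).im = 3 * z.im * c ∧ ¬ 3 ∣ c := by
  refine ⟨z.re ^ 2 + z.im ^ 2, ?_, fun h ↦ ?_⟩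
  · simp only [pow_succ, pow_zero, one_mul, re_mul, im_mul]
    ring
  have h0 := (ZMod.intCast_zmod_eq_zero_iff_dvd _ 3).mpr (by exact_mod_cast h)
  push_cast at h0
  rw [hz] at h0
  generalize (z.im : ZMod 3) = b at h0
  revert b
  decide

theorem exists_im_pow_three_pow_eq {z : ℤ√3} (hz : (z.re : ZMod 3) = 1) (j : ℕ) :
    ∃ c : ℤ, (z ^ 3 ^ j).im = 3 ^ j * z.im * c ∧ ¬ 3 ∣ c := by
  induction j with
  | zero => exact ⟨1, by simp, by norm_num⟩
  | succ j ih =>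
    obtain ⟨c, hc, hc3⟩ := ih
    have hre : ((z ^ 3 ^ j).re : ZMod 3) = 1 := by
      rw [← reModThree_apply, map_pow, reModThree_apply, hz, one_pow]
    obtain ⟨c', hc', hc3'⟩ := exists_im_pow_three_eq hre
    refine ⟨c * c', by rw [pow_succ, pow_mul, hc', hc]; ring, ?_⟩
    exact fun h ↦ (Int.prime_three.dvd_mul.mp h).elim hc3 hc3'

end Zsqrtd

theorem isUnit_intCast_of_not_dvd {R : Type*} [CommRing R] {p n : ℕ} [CharP R (p ^ n)]
    (hp : p.Prime) {z : ℤ} (hz : ¬ (p : ℤ) ∣ z) : IsUnit (z : R) := by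
  have hcop : IsCoprime z ((p : ℤ) ^ n) :=
    ((Prime.coprime_iff_not_dvd (Nat.prime_iff_prime_int.mp hp)).mpr hz).symm.pow_right
  have h0 : (((p : ℤ) ^ n : ℤ) : R) = 0 := by exact_mod_cast CharP.cast_eq_zero R (p ^ n)
  simpa [h0, isCoprime_zero_right] using hcop.map (Int.castRingHom R)

namespace ZMod

theorem mem_ker_unitsMap_iff {m n : ℕ} (h : n ∣ m) {v : (ZMod m)ˣ} {z : ℤ}
    (hz : (z : ZMod m) = v) : v ∈ (unitsMap h).ker ↔ (z : ZMod n) = 1 := by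
  rw [MonoidHom.mem_ker, Units.ext_iff, unitsMap_val, ← hz, cast_intCast h, Units.val_one]

theorem card_ker_unitsMap_mul {m n : ℕ} [NeZero m] (h : n ∣ m) :
    Nat.card (unitsMap h).ker * Nat.card (ZMod n)ˣ = Nat.card (ZMod m)ˣ := by
  rw [← (unitsMap h).ker.card_mul_index, Subgroup.index_ker,
    MonoidHom.range_eq_top.mpr (unitsMap_surjective h), Subgroup.card_top]

theorem card_ker_unitsMap_prime_pow {p m : ℕ} (hp : p.Prime) (hm : m ≠ 0) :
    Nat.card (unitsMap (dvd_pow_self p hm)).ker = p ^ (m - 1) := by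
  have : NeZero (p ^ m) := ⟨pow_ne_zero m hp.ne_zero⟩
  have : Fact p.Prime := ⟨hp⟩
  have key := card_ker_unitsMap_mul (dvd_pow_self p hm)
  rw [Nat.card_eq_fintype_card (α := (ZMod p)ˣ), Nat.card_eq_fintype_card (α := (ZMod (p ^ m))ˣ),
    card_units_eq_totient, card_units_eq_totient, Nat.totient_prime hp,
    Nat.totient_prime_pow hp (Nat.pos_of_ne_zero hm)] at key
  exact Nat.eq_of_mul_eq_mul_right (by have := hp.two_le; omega) key

theorem exists_sq_eq_of_mem_ker_unitsMap {p m : ℕ} (hp : p.Prime) (hp2 : p ≠ 2) (hm : m ≠ 0)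
    {v : (ZMod (p ^ m))ˣ} (hv : v ∈ (unitsMap (dvd_pow_self p hm)).ker) :
    ∃ w ∈ (unitsMap (dvd_pow_self p hm)).ker, w ^ 2 = v := by
  have hcop : (Nat.card (unitsMap (dvd_pow_self p hm)).ker).Coprime 2 := by
    rw [card_ker_unitsMap_prime_pow hp hm]
    exact Nat.Coprime.pow_left _ ((Nat.coprime_primes hp Nat.prime_two).mpr hp2)
  obtain ⟨w, hw⟩ := (powCoprime hcop).surjective ⟨v, hv⟩
  exact ⟨w, w.2, congrArg Subtype.val hw⟩

end ZMod

namespace Sqrt3Quot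

variable {k : ℕ}

abbrev mk (k : ℕ) : ℤ√3 →+* Sqrt3Quot k := Ideal.Quotient.mk _

theorem mk_eq_zero_iff (x : ℤ√3) :
    mk k x = 0 ↔ 3 ^ ((k + 1) / 2) ∣ x.re ∧ 3 ^ (k / 2) ∣ x.im := by
  rw [Ideal.Quotient.eq_zero_iff_mem, Ideal.mem_span_singleton, sqrtd_pow_dvd_iff]

theorem mk_eq_mk_iff (x y : ℤ√3) :
    mk k x = mk k y ↔ 3 ^ ((k + 1) / 2) ∣ x.re - y.re ∧ 3 ^ (k / 2) ∣ x.im - y.im := by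
  rw [← sub_eq_zero, ← map_sub, mk_eq_zero_iff, re_sub, im_sub]

instance : CharP (Sqrt3Quot k) (3 ^ ((k + 1) / 2)) where
  cast_eq_zero_iff n := by
    rw [← map_natCast (mk k), mk_eq_zero_iff]
    simp only [re_natCast, im_natCast, dvd_zero, and_true]
    exact_mod_cast Iff.rfl

theorem isUnit_mk_iff (hk : k ≠ 0) (x : ℤ√3) : IsUnit (mk k x) ↔ ¬ 3 ∣ x.re := by
  constructor
  · rintro ⟨u, hu⟩ h3
    obtain ⟨y, hy⟩ := Ideal.Quotient.mk_surjective (u⁻¹ : (Sqrt3Quot k)ˣ).val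
    have hxy : mk k (x * y) = mk k 1 := by rw [map_mul, ← hu, hy, map_one, Units.mul_inv]
    have h1 : 3 ∣ (x * y).re - 1 :=
      (dvd_pow_self 3 (by omega)).trans ((mk_eq_mk_iff _ _).mp hxy).1
    rw [re_mul] at h1
    have : (3 : ℤ) ∣ x.re * y.re + 3 * x.im * y.im :=
      dvd_add (h3.mul_right _) (by rw [mul_assoc]; exact dvd_mul_right _ _)
    omega
  · intro hx
    have hnorm : ¬ ((3 : ℕ) : ℤ) ∣ x.norm := by
      rw [← ZMod.intCast_zmod_eq_zero_iff_dvd, intCast_norm_eq_one hx]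
      exact one_ne_zero
    have := isUnit_intCast_of_not_dvd (R := Sqrt3Quot k) Nat.prime_three hnorm
    rw [← map_intCast (mk k), norm_eq_mul_conj, map_mul] at this
    exact isUnit_of_mul_isUnit_left this

abbrev ofZMod (k : ℕ) : ZMod (3 ^ ((k + 1) / 2)) →+* Sqrt3Quot k := ZMod.castHom dvd_rfl _

def normSubgroup (hk : k ≠ 0) : Subgroup (Sqrt3Quot k)ˣ :=
  (ZMod.unitsMap (dvd_pow_self 3 (by omega : (k + 1) / 2 ≠ 0))).ker.map (Units.map (ofZMod k))

theorem exists_norm_eq_iff_mem_normSubgroup (hk : k ≠ 0) (u : (Sqrt3Quot k)ˣ) :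
    (∃ x : ℤ√3, IsUnit (mk k x) ∧ (x.norm : Sqrt3Quot k) = u) ↔ u ∈ normSubgroup hk := by
  simp only [normSubgroup, Subgroup.mem_map, Units.ext_iff, Units.coe_map, MonoidHom.coe_coe]
  constructor
  · rintro ⟨x, hx, hxu⟩
    have hre : ¬ 3 ∣ x.re := (isUnit_mk_iff hk x).mp hx
    have hnorm : ¬ ((3 : ℕ) : ℤ) ∣ x.norm := by
      rw [← ZMod.intCast_zmod_eq_zero_iff_dvd, intCast_norm_eq_one hre]
      exact one_ne_zero
    have hu := isUnit_intCast_of_not_dvd (R := ZMod (3 ^ ((k + 1) / 2))) Nat.prime_three hnorm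
    refine ⟨hu.unit, (ZMod.mem_ker_unitsMap_iff _ hu.unit_spec).mpr (intCast_norm_eq_one hre), ?_⟩
    rw [hu.unit_spec, map_intCast, hxu]
  · rintro ⟨v, hv, hvu⟩
    obtain ⟨w, -, rfl⟩ :=
      ZMod.exists_sq_eq_of_mem_ker_unitsMap Nat.prime_three (by norm_num) (by omega) hv
    refine ⟨(ZMod.cast (w : ZMod (3 ^ ((k + 1) / 2))) : ℤ), ?_, ?_⟩
    · rw [map_intCast, ← map_intCast (ofZMod k), ZMod.intCast_zmod_cast]
      exact w.isUnit.map _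
    · rw [← hvu, norm_intCast, Int.cast_mul, ← map_intCast (ofZMod k), ZMod.intCast_zmod_cast,
        Units.val_pow_eq_pow_val, map_pow, sq]

theorem mem_normSubgroup_iff (hk : k ≠ 0) {u : (Sqrt3Quot k)ˣ} {y : ℤ√3}
    (hy : (u : Sqrt3Quot k) = mk k y) :
    u ∈ normSubgroup hk ↔ (y.re : ZMod 3) = 1 ∧ 3 ^ (k / 2) ∣ y.im := by
  simp only [normSubgroup, Subgroup.mem_map, Units.ext_iff, Units.coe_map, MonoidHom.coe_coe, hy]
  constructor
  · rintro ⟨v, hv, hvy⟩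
    have hc := ZMod.intCast_zmod_cast (v : ZMod (3 ^ ((k + 1) / 2)))
    have hc3 := (ZMod.mem_ker_unitsMap_iff _ hc).mp hv
    rw [← hc, map_intCast, ← map_intCast (mk k), mk_eq_mk_iff, re_intCast, im_intCast,
      zero_sub, dvd_neg] at hvy
    refine ⟨?_, hvy.2⟩
    rw [← hc3, ZMod.intCast_eq_intCast_iff_dvd_sub]
    exact_mod_cast (dvd_pow_self 3 (by omega)).trans hvy.1
  · rintro ⟨hre, him⟩
    have hre3 : ¬ ((3 : ℕ) : ℤ) ∣ y.re := by
      rw [← ZMod.intCast_zmod_eq_zero_iff_dvd, hre]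
      exact one_ne_zero
    have hu := isUnit_intCast_of_not_dvd (R := ZMod (3 ^ ((k + 1) / 2))) Nat.prime_three hre3
    refine ⟨hu.unit, (ZMod.mem_ker_unitsMap_iff _ hu.unit_spec).mpr hre, ?_⟩
    rw [hu.unit_spec, map_intCast, ← map_intCast (mk k), mk_eq_mk_iff, re_intCast, im_intCast,
      sub_self, zero_sub, dvd_neg]
    exact ⟨dvd_zero _, him⟩

theorem mk_val_bijective (k : ℕ) :
    Function.Bijective fun p : ZMod (3 ^ ((k + 1) / 2)) × ZMod (3 ^ (k / 2)) ↦
      mk k ⟨p.1.val, p.2.val⟩ := by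
  have hval {n : ℕ} [NeZero n] (z : ℤ) (a : ZMod n) : (n : ℤ) ∣ a.val - z ↔ (z : ZMod n) = a := by
    rw [← ZMod.intCast_eq_intCast_iff_dvd_sub]
    simp
  constructor
  · rintro ⟨a, b⟩ ⟨a', b'⟩ h
    obtain ⟨ha, hb⟩ := (mk_eq_mk_iff _ _).mp h
    have ha' := (hval _ _).mp (by exact_mod_cast ha)
    have hb' := (hval _ _).mp (by exact_mod_cast hb)
    rw [Int.cast_natCast, ZMod.natCast_zmod_val] at ha' hb'
    exact Prod.ext ha'.symm hb'.symm
  · intro x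
    obtain ⟨y, rfl⟩ := Ideal.Quotient.mk_surjective x
    refine ⟨((y.re : ZMod _), (y.im : ZMod _)), (mk_eq_mk_iff _ _).mpr ⟨?_, ?_⟩⟩
    · exact_mod_cast (hval y.re _).mpr rfl
    · exact_mod_cast (hval y.im _).mpr rfl

instance : Finite (Sqrt3Quot k) := Finite.of_surjective _ (mk_val_bijective k).2

theorem card_units (hk : k ≠ 0) :
    Nat.card (Sqrt3Quot k)ˣ = Nat.card (ZMod (3 ^ ((k + 1) / 2)))ˣ * 3 ^ (k / 2) := by
  have hunits (R : Type) [CommRing R] : Nat.card Rˣ = Nat.card {x : R // IsUnit x} :=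
    Nat.card_congr (Equiv.ofInjective _ Units.val_injective)
  have hunit (p : ZMod (3 ^ ((k + 1) / 2)) × ZMod (3 ^ (k / 2))) :
      IsUnit p.1 ↔ IsUnit (mk k ⟨p.1.val, p.2.val⟩) := by
    rw [isUnit_mk_iff hk, ← ZMod.natCast_zmod_val p.1,
      ZMod.isUnit_natCast_iff_not_dvd_pow Nat.prime_three (by omega), ZMod.natCast_zmod_val]
    dsimp only
    norm_cast
  calc Nat.card (Sqrt3Quot k)ˣ
      = Nat.card {p : ZMod (3 ^ ((k + 1) / 2)) × ZMod (3 ^ (k / 2)) // IsUnit p.1} := by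
        rw [hunits]
        exact Nat.card_congr ((Equiv.ofBijective _ (mk_val_bijective k)).subtypeEquiv hunit).symm
    _ = Nat.card ({a : ZMod (3 ^ ((k + 1) / 2)) // IsUnit a} × ZMod (3 ^ (k / 2))) :=
        Nat.card_congr Equiv.prodSubtypeFstEquivSubtypeProd
    _ = Nat.card (ZMod (3 ^ ((k + 1) / 2)))ˣ * 3 ^ (k / 2) := by
        rw [Nat.card_prod, Nat.card_zmod, hunits]

theorem card_quotient_normSubgroup (hk : k ≠ 0) :
    Nat.card ((Sqrt3Quot k)ˣ ⧸ normSubgroup hk) = 2 * 3 ^ (k / 2) := by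
  have hW : Nat.card (normSubgroup hk) = Nat.card (ZMod.unitsMap
      (dvd_pow_self 3 (by omega : (k + 1) / 2 ≠ 0))).ker :=
    Subgroup.card_map_of_injective (Units.map_injective (ZMod.castHom_injective _))
  have hK := ZMod.card_ker_unitsMap_mul (m := 3 ^ ((k + 1) / 2)) (dvd_pow_self 3 (by omega))
  have h3 : Nat.card (ZMod 3)ˣ = 2 := by rw [Nat.card_eq_fintype_card, ZMod.card_units]
  have := (normSubgroup hk).card_eq_card_quotient_mul_card_subgroup
  rw [card_units hk, ← hK, h3, ← hW] at this
  exact (Nat.eq_of_mul_eq_mul_right Nat.card_pos (by rw [← this]; ring)).symm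

theorem orderOf_mk_sqrtd_sub_one (hk : k ≠ 0) {g : (Sqrt3Quot k)ˣ}
    (hg : (g : Sqrt3Quot k) = mk k (sqrtd - 1)) :
    orderOf (g : (Sqrt3Quot k)ˣ ⧸ normSubgroup hk) = 2 * 3 ^ (k / 2) := by
  have hpow (n : ℕ) : (g : (Sqrt3Quot k)ˣ ⧸ normSubgroup hk) ^ n = 1 ↔
      ((((sqrtd - 1 : ℤ√3) ^ n).re : ZMod 3) = 1 ∧ 3 ^ (k / 2) ∣ ((sqrtd - 1 : ℤ√3) ^ n).im) := by
    rw [← QuotientGroup.mk_pow, QuotientGroup.eq_one_iff,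
      mem_normSubgroup_iff hk (by rw [Units.val_pow_eq_pow_val, hg, map_pow])]
  have hre (n : ℕ) : (((sqrtd - 1 : ℤ√3) ^ n).re : ZMod 3) = (-1) ^ n := by
    rw [← reModThree_apply, map_pow, reModThree_apply]
    rfl
  have hsq : ((sqrtd - 1 : ℤ√3) ^ 2) = ⟨4, -2⟩ := by ext <;> simp [sq]
  have him (j : ℕ) :
      ∃ c : ℤ, ((sqrtd - 1 : ℤ√3) ^ (2 * 3 ^ j)).im = 3 ^ j * (-2 * c) ∧ ¬ 3 ∣ c := by
    obtain ⟨c, hc, hc3⟩ := exists_im_pow_three_pow_eq (z := (sqrtd - 1) ^ 2) (by rw [hsq]; rfl) j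
    exact ⟨c, by rw [pow_mul, hc, hsq]; ring, hc3⟩
  apply orderOf_eq_of_pow_and_pow_div_prime (by positivity)
  · rw [hpow, hre, pow_mul]
    obtain ⟨c, hc, -⟩ := him (k / 2)
    exact ⟨by simp, hc ▸ dvd_mul_right _ _⟩
  · intro p hp hpd
    rcases hp.dvd_mul.mp hpd with h2 | h3
    · rw [(Nat.prime_dvd_prime_iff_eq hp Nat.prime_two).mp h2, Nat.mul_div_cancel_left _ two_pos,
        Ne, hpow, hre, Odd.neg_one_pow (Odd.pow (by decide))]
      exact fun h ↦ absurd h.1 (by decide)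
    · have hp3 : p = 3 := (Nat.prime_dvd_prime_iff_eq hp Nat.prime_three).mp (hp.dvd_of_dvd_pow h3)
      obtain ⟨f, hf⟩ : ∃ f, k / 2 = f + 1 :=
        Nat.exists_eq_add_one.mpr (Nat.pos_of_ne_zero fun h ↦ by simp [hp3, h] at h3)
      obtain ⟨c, hc, hc3⟩ := him f
      rw [hp3, hf, show 2 * 3 ^ (f + 1) / 3 = 2 * 3 ^ f by rw [pow_succ]; omega, Ne, hpow, hc,
        hf, pow_succ]
      rintro ⟨-, h⟩
      have := Int.dvd_of_mul_dvd_mul_left (by positivity) h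
      exact hc3 ((Int.prime_three.dvd_mul.mp this).resolve_left (by decide))

end Sqrt3Quot

/-- For every `k ≥ 1`, let `W_k ≤ (ℤ[√3]/(√3)^k)ˣ` be the subgroup of
classes of norms `N(x)` of elements `x ∈ ℤ[√3]` that are units modulo `(√3)^k`.  Then the
quotient `(ℤ[√3]/(√3)^k)ˣ / W_k` is cyclic of order `2·3^⌊k/2⌋`, generated by the class
of `√3 - 1`. -/
theorem stmt_8 (k : ℕ) (hk : 1 ≤ k)
    (W : Subgroup (Sqrt3Quot k)ˣ)
    (hW : ∀ u : (Sqrt3Quot k)ˣ, u ∈ W ↔ ∃ x : Zsqrtd 3,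
      IsUnit (Ideal.Quotient.mk (Ideal.span {(Zsqrtd.sqrtd : Zsqrtd 3) ^ k}) x) ∧
      ((Zsqrtd.norm x : Sqrt3Quot k) = (u : Sqrt3Quot k))) :
    Nat.card ((Sqrt3Quot k)ˣ ⧸ W) = 2 * 3 ^ (k / 2) ∧
    ∃ g : (Sqrt3Quot k)ˣ,
      (g : Sqrt3Quot k) =
        Ideal.Quotient.mk (Ideal.span {(Zsqrtd.sqrtd : Zsqrtd 3) ^ k}) (Zsqrtd.sqrtd - 1) ∧
      Subgroup.zpowers (QuotientGroup.mk g : (Sqrt3Quot k)ˣ ⧸ W) = ⊤ := by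
  have hk0 : k ≠ 0 := by omega
  obtain rfl : W = Sqrt3Quot.normSubgroup hk0 := by
    ext u
    rw [hW, Sqrt3Quot.exists_norm_eq_iff_mem_normSubgroup]
  have hg : IsUnit (Sqrt3Quot.mk k (sqrtd - 1)) := (Sqrt3Quot.isUnit_mk_iff hk0 _).mpr (by decide)
  refine ⟨Sqrt3Quot.card_quotient_normSubgroup hk0, hg.unit, hg.unit_spec, ?_⟩
  apply Subgroup.eq_top_of_card_eq
  rw [Nat.card_zpowers, Sqrt3Quot.orderOf_mk_sqrtd_sub_one hk0 hg.unit_spec,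
    Sqrt3Quot.card_quotient_normSubgroup]
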